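/- arXiv:1005.1507 — 5 statements merged into one kernel-verified Lean document; each statement's English description precedes it below -/
import Mathlib

section
/- For every λ ∈ (0,1) there exists a constant C = C(λ) > 0 such that for every c_λ > 0 and every φ ∈ L¹(ℝ) ∩ BV(ℝ), the integral defining L[φ](x) converges absolutely for a.e. x ∈ ℝ, L[φ] ∈ L¹(ℝ), and ∫_ℝ |L[φ](x)| dx ≤ c_λ C ‖φ‖_{L¹(ℝ)}^{1−λ} |φ|_{BV(ℝ)}^{λ}. -/
open MeasureTheory Filter Set

/-- The fractional Laplacian `L[φ](x) = c_λ ∫_{z ≠ 0} (φ(x+z) − φ(x))/|z|^{1+λ} dz`. -/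
noncomputable def fracLap (clam lam : ℝ) (φ : ℝ → ℝ) (x : ℝ) : ℝ :=
  clam * ∫ z in ({0}ᶜ : Set ℝ), (φ (x + z) - φ x) / |z| ^ (1 + lam)

/-- Absolute convergence of the integral defining the fractional Laplacian at `x`. -/
def fracLapConv (lam : ℝ) (φ : ℝ → ℝ) (x : ℝ) : Prop :=
  IntegrableOn (fun z : ℝ => (φ (x + z) - φ x) / |z| ^ (1 + lam)) ({0}ᶜ : Set ℝ)

open scoped ENNReal

/-!
By Tonelli it suffices to bound `∫∫ |φ(x+z) - φ(x)| |z|^(-1-λ) dx dz`. For fixed `z` the inner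
integral is at most `min (2‖φ‖₁) (|z| |φ|_BV)`: the first bound is the triangle inequality, the
second comes from cutting `ℝ` into intervals of length `|z|` and noting that along every
progression `x + ℤ|z|` the increments of `φ` add up to at most `|φ|_BV`. With `a = 2‖φ‖₁` and
`b = |φ|_BV`, splitting the `z`-integral at `|z| = a / b` gives
`∫ min a (b|z|) |z|^(-1-λ) dz = 2 a^(1-λ) b^λ / (λ(1-λ))`.
-/

theorem tsum_lintegral_le_lintegral_tsum {α ι : Type*} [MeasurableSpace α] (μ : Measure α)
    (f : ι → α → ℝ≥0∞) : ∑' i, ∫⁻ x, f i x ∂μ ≤ ∫⁻ x, ∑' i, f i x ∂μ := by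
  classical
  rw [ENNReal.tsum_eq_iSup_sum]
  refine iSup_le fun s => ?_
  calc ∑ i ∈ s, ∫⁻ x, f i x ∂μ ≤ ∫⁻ x, ∑ i ∈ s, f i x ∂μ := by
        induction s using Finset.induction with
        | empty => simp
        | insert i s hi ih =>
          simp only [Finset.sum_insert hi]
          exact (add_le_add_right ih _).trans (le_lintegral_add _ _)
    _ ≤ ∫⁻ x, ∑' i, f i x ∂μ := lintegral_mono fun x => ENNReal.sum_le_tsum s

theorem lintegral_eq_tsum_setLIntegral_Ioc_add_int_mul {h : ℝ} (hh : 0 < h) (f : ℝ → ℝ≥0∞) :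
    ∫⁻ x, f x = ∑' n : ℤ, ∫⁻ x in Ioc 0 h, f (x + n * h) := by
  -- `lintegral_eq_tsum'` translates by `-g`, hence the `Equiv.neg` in `e`.
  let e : ℤ ≃ AddSubgroup.zmultiples h :=
    (Equiv.neg ℤ).trans (Equiv.ofInjective _ (zsmul_left_strictMono hh).injective)
  have he : ∀ n, -(e n : ℝ) = n * h := fun n => by
    change -((-n) • h) = _
    simp
  rw [(isAddFundamentalDomain_Ioc hh 0 volume).lintegral_eq_tsum', zero_add, ← e.tsum_eq]
  refine tsum_congr fun n => setLIntegral_congr_fun measurableSet_Ioc fun x _ => ?_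
  rw [AddSubgroup.vadd_def, vadd_eq_add, add_comm, AddSubgroup.coe_neg, he]

theorem tsum_edist_add_int_mul_le_eVariationOn {E : Type*} [PseudoEMetricSpace E] (f : ℝ → E)
    {h : ℝ} (hh : 0 ≤ h) (x : ℝ) :
    ∑' n : ℤ, edist (f (x + n * h + h)) (f (x + n * h)) ≤ eVariationOn f univ := by
  have hcover : ∀ s : Finset ℤ, ∃ N : ℕ, s ⊆ Finset.Ico (-(N : ℤ)) N := fun s =>
    ⟨s.sup Int.natAbs + 1, fun n hn => by
      have := Finset.le_sup (f := Int.natAbs) hn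
      simp only [Finset.mem_Ico]
      omega⟩
  rw [ENNReal.tsum_eq_iSup_sum' _ hcover]
  refine iSup_le fun N => ?_
  have hu : Monotone fun i : ℕ => x + ((-(N : ℤ) + i : ℤ) : ℝ) * h := fun i j hij => by
    have : ((-(N : ℤ) + i : ℤ) : ℝ) ≤ ((-(N : ℤ) + j : ℤ) : ℝ) := by push_cast; gcongr
    dsimp only
    gcongr
  refine le_of_eq_of_le ?_ (eVariationOn.sum_le (n := ((N : ℤ) - -(N : ℤ)).toNat) hu
    fun _ => mem_univ _)
  rw [Int.Ico_eq_finset_map, Finset.sum_map]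
  refine Finset.sum_congr rfl fun i _ => ?_
  simp only [Function.Embedding.trans_apply, Nat.castEmbedding_apply, addLeftEmbedding_apply]
  push_cast
  ring_nf

theorem lintegral_edist_add_le_mul_eVariationOn {E : Type*} [PseudoEMetricSpace E] (f : ℝ → E)
    (h : ℝ) : ∫⁻ x, edist (f (x + h)) (f x) ≤ ENNReal.ofReal |h| * eVariationOn f univ := by
  have hpos : ∀ h : ℝ, 0 < h →
      ∫⁻ x, edist (f (x + h)) (f x) ≤ ENNReal.ofReal h * eVariationOn f univ := fun h hh =>
    calc ∫⁻ x, edist (f (x + h)) (f x)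
        = ∑' n : ℤ, ∫⁻ x in Ioc 0 h, edist (f (x + n * h + h)) (f (x + n * h)) :=
          lintegral_eq_tsum_setLIntegral_Ioc_add_int_mul hh _
      _ ≤ ∫⁻ x in Ioc 0 h, ∑' n : ℤ, edist (f (x + n * h + h)) (f (x + n * h)) :=
          tsum_lintegral_le_lintegral_tsum _ _
      _ ≤ ∫⁻ _ in Ioc 0 h, eVariationOn f univ :=
          lintegral_mono fun x => tsum_edist_add_int_mul_le_eVariationOn f hh.le x
      _ = ENNReal.ofReal h * eVariationOn f univ := by
          rw [setLIntegral_const, Real.volume_Ioc, sub_zero, mul_comm]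
  rcases lt_trichotomy h 0 with hneg | rfl | hh
  · rw [abs_of_neg hneg, ← lintegral_add_right_eq_self _ (-h)]
    simpa [edist_comm] using hpos (-h) (neg_pos.mpr hneg)
  · simp
  · simpa [abs_of_pos hh] using hpos h hh

theorem lintegral_edist_add_le_two_mul_lintegral_enorm {G E : Type*} [MeasurableSpace G]
    [AddGroup G] [MeasurableAdd G] {μ : Measure G} [μ.IsAddRightInvariant]
    [NormedAddCommGroup E] {f : G → E} (hf : AEStronglyMeasurable f μ) (h : G) :
    ∫⁻ x, edist (f (x + h)) (f x) ∂μ ≤ 2 * ∫⁻ x, ‖f x‖ₑ ∂μ :=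
  calc ∫⁻ x, edist (f (x + h)) (f x) ∂μ ≤ ∫⁻ x, ‖f (x + h)‖ₑ + ‖f x‖ₑ ∂μ :=
        lintegral_mono fun x => (edist_eq_enorm_sub _ _).trans_le enorm_sub_le
    _ = 2 * ∫⁻ x, ‖f x‖ₑ ∂μ := by
        rw [lintegral_add_right' _ hf.enorm, lintegral_add_right_eq_self (fun x => ‖f x‖ₑ) h,
          two_mul]

theorem lintegral_comp_abs_le {f : ℝ → ℝ≥0∞} (hf : Measurable f) :
    ∫⁻ x, f |x| ≤ 2 * ∫⁻ x in Ioi 0, f x := by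
  set g := (Ici 0).indicator f
  have hsplit : ∀ x, f |x| ≤ g x + g (-x) := fun x => by
    rcases le_total 0 x with hx | hx
    · simp [g, abs_of_nonneg hx, hx]
    · simp [g, abs_of_nonpos hx, hx]
  calc ∫⁻ x, f |x| ≤ ∫⁻ x, g x + g (-x) := lintegral_mono hsplit
    _ = 2 * ∫⁻ x in Ici 0, f x := by
        rw [lintegral_add_left (hf.indicator measurableSet_Ici), lintegral_neg_eq_self,
          lintegral_indicator measurableSet_Ici, two_mul]
    _ = 2 * ∫⁻ x in Ioi 0, f x := by rw [setLIntegral_congr Ioi_ae_eq_Ici]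

theorem setLIntegral_Ioc_ofReal_mul_rpow {b r lam : ℝ} (hb : 0 ≤ b) (hr : 0 < r) (hlam : lam < 1) :
    ∫⁻ z in Ioc 0 r, ENNReal.ofReal (b * z ^ (-lam)) =
      ENNReal.ofReal (b * r ^ (1 - lam) / (1 - lam)) := by
  have hint : IntegrableOn (fun z => b * z ^ (-lam)) (Ioc 0 r) := by
    have := intervalIntegral.intervalIntegrable_rpow' (a := 0) (b := r) (r := -lam) (by linarith)
    exact ((intervalIntegrable_iff_integrableOn_Ioc_of_le hr.le).mp this).const_mul b
  rw [← ofReal_integral_eq_lintegral_ofReal hint, integral_const_mul,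
    ← intervalIntegral.integral_of_le hr.le, integral_rpow (Or.inl (by linarith)),
    Real.zero_rpow (by linarith)]
  · ring_nf
  · filter_upwards [ae_restrict_mem measurableSet_Ioc] with z hz
    exact mul_nonneg hb (Real.rpow_nonneg hz.1.le _)

theorem setLIntegral_Ioi_ofReal_mul_rpow {a r lam : ℝ} (ha : 0 ≤ a) (hr : 0 < r) (hlam : 0 < lam) :
    ∫⁻ z in Ioi r, ENNReal.ofReal (a * z ^ (-(1 + lam))) =
      ENNReal.ofReal (a * r ^ (-lam) / lam) := by
  have hint : IntegrableOn (fun z => a * z ^ (-(1 + lam))) (Ioi r) :=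
    (integrableOn_Ioi_rpow_of_lt (by linarith) hr).const_mul a
  rw [← ofReal_integral_eq_lintegral_ofReal hint, integral_const_mul,
    integral_Ioi_rpow_of_lt (by linarith) hr]
  · ring_nf
  · filter_upwards [ae_restrict_mem measurableSet_Ioi] with z hz
    exact mul_nonneg ha (Real.rpow_nonneg (hr.trans hz).le _)

theorem lintegral_Ioi_ofReal_min_mul_rpow {a b lam : ℝ} (ha : 0 ≤ a) (hb : 0 ≤ b)
    (hlam : lam ∈ Ioo 0 1) :
    ∫⁻ z in Ioi 0, ENNReal.ofReal (min a (b * z) * z ^ (-(1 + lam))) =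
      ENNReal.ofReal (a ^ (1 - lam) * b ^ lam / (lam * (1 - lam))) := by
  obtain ⟨hlam0, hlam1⟩ := hlam
  rcases ha.eq_or_lt with rfl | ha
  · rw [setLIntegral_congr_fun measurableSet_Ioi fun z hz => by
      rw [min_eq_left (mul_nonneg hb (le_of_lt hz))]]
    simp [Real.zero_rpow (by linarith : 1 - lam ≠ 0)]
  rcases hb.eq_or_lt with rfl | hb
  · simp [ha.le, Real.zero_rpow hlam0.ne']
  set r := a / b
  have hr : 0 < r := div_pos ha hb
  have hIoc : EqOn (fun z => min a (b * z) * z ^ (-(1 + lam))) (fun z => b * z ^ (-lam))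
      (Ioc 0 r) := fun z hz => by
    have : b * z ≤ a := by rw [← le_div_iff₀' hb]; exact hz.2
    dsimp only
    rw [min_eq_right this, mul_assoc, ← Real.rpow_one_add' hz.1.le (by linarith)]
    ring_nf
  have hIoi : EqOn (fun z => min a (b * z) * z ^ (-(1 + lam))) (fun z => a * z ^ (-(1 + lam)))
      (Ioi r) := fun z hz => by
    have : a ≤ b * z := by rw [← div_le_iff₀' hb]; exact le_of_lt hz
    simp only [min_eq_left this]
  rw [← Ioc_union_Ioi_eq_Ioi hr.le, lintegral_union measurableSet_Ioi (Ioc_disjoint_Ioi le_rfl),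
    setLIntegral_congr_fun measurableSet_Ioc fun z hz => congrArg ENNReal.ofReal (hIoc hz),
    setLIntegral_congr_fun measurableSet_Ioi fun z hz => congrArg ENNReal.ofReal (hIoi hz),
    setLIntegral_Ioc_ofReal_mul_rpow hb.le hr hlam1,
    setLIntegral_Ioi_ofReal_mul_rpow ha.le hr hlam0,
    ← ENNReal.ofReal_add (by positivity) (by positivity)]
  congr 1
  have hsub : ∀ x : ℝ, 0 < x → x ^ (1 - lam) = x / x ^ lam := fun x hx => by
    rw [Real.rpow_sub hx, Real.rpow_one]
  have := Real.rpow_pos_of_pos ha lam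
  have := Real.rpow_pos_of_pos hb lam
  rw [Real.div_rpow ha.le hb.le, Real.div_rpow ha.le hb.le, hsub a ha, hsub b hb,
    Real.rpow_neg ha.le, Real.rpow_neg hb.le]
  field_simp
  ring

theorem integral_norm_integral_prod_le {α β E : Type*} [MeasurableSpace α] [MeasurableSpace β]
    {μ : Measure α} {ν : Measure β} [SFinite μ] [SFinite ν] [NormedAddCommGroup E]
    [NormedSpace ℝ E] {F : α × β → E} (hF : Integrable F (μ.prod ν)) :
    ∫ x, ‖∫ y, F (x, y) ∂ν‖ ∂μ ≤ (∫⁻ p, ‖F p‖ₑ ∂(μ.prod ν)).toReal :=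
  calc ∫ x, ‖∫ y, F (x, y) ∂ν‖ ∂μ ≤ ∫ x, ∫ y, ‖F (x, y)‖ ∂ν ∂μ :=
        integral_mono hF.integral_prod_left.norm hF.norm.integral_prod_left
          fun _ => norm_integral_le_integral_norm _
    _ = (∫⁻ p, ‖F p‖ₑ ∂(μ.prod ν)).toReal := by
        rw [← integral_prod _ hF.norm, integral_norm_eq_lintegral_enorm hF.1]

noncomputable def fracLapIntegrand (lam : ℝ) (φ : ℝ → ℝ) (p : ℝ × ℝ) : ℝ :=
  (φ (p.1 + p.2) - φ p.1) / |p.2| ^ (1 + lam)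

theorem fracLap_eq_integral_fracLapIntegrand (clam lam : ℝ) (φ : ℝ → ℝ) :
    fracLap clam lam φ = fun x => clam * ∫ z, fracLapIntegrand lam φ (x, z) := by
  ext x
  simp [fracLap, fracLapIntegrand, restrict_compl_singleton]

theorem aestronglyMeasurable_fracLapIntegrand (lam : ℝ) {φ : ℝ → ℝ}
    (hφ : AEStronglyMeasurable φ) :
    AEStronglyMeasurable (fracLapIntegrand lam φ) (volume.prod volume) := by
  have hsum : AEStronglyMeasurable (fun p : ℝ × ℝ => φ (p.1 + p.2)) (volume.prod volume) :=
    hφ.comp_quasiMeasurePreserving (quasiMeasurePreserving_add volume volume)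
  have hfst : AEStronglyMeasurable (fun p : ℝ × ℝ => φ p.1) (volume.prod volume) :=
    hφ.comp_quasiMeasurePreserving Measure.quasiMeasurePreserving_fst
  exact (hsum.sub hfst).div₀
    ((continuous_abs.comp continuous_snd).measurable.pow_const _).aestronglyMeasurable

theorem lintegral_edist_add_le_ofReal_min {φ : ℝ → ℝ} (hφ : Integrable φ)
    (hBV : eVariationOn φ univ ≠ ⊤) (z : ℝ) :
    ∫⁻ x, edist (φ (x + z)) (φ x) ≤
      ENNReal.ofReal (min (2 * ∫ x, |φ x|) ((eVariationOn φ univ).toReal * |z|)) := by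
  rw [ENNReal.ofReal_min]
  refine le_min ?_ ?_
  · calc ∫⁻ x, edist (φ (x + z)) (φ x) ≤ 2 * ∫⁻ x, ‖φ x‖ₑ :=
          lintegral_edist_add_le_two_mul_lintegral_enorm hφ.1 z
      _ = ENNReal.ofReal (2 * ∫ x, |φ x|) := by
          rw [ENNReal.ofReal_mul zero_le_two, ← ofReal_integral_norm_eq_lintegral_enorm hφ]
          simp [Real.norm_eq_abs]
  · calc ∫⁻ x, edist (φ (x + z)) (φ x) ≤ ENNReal.ofReal |z| * eVariationOn φ univ :=
          lintegral_edist_add_le_mul_eVariationOn φ z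
      _ = ENNReal.ofReal ((eVariationOn φ univ).toReal * |z|) := by
          rw [mul_comm, ENNReal.ofReal_mul ENNReal.toReal_nonneg, ENNReal.ofReal_toReal hBV]

theorem lintegral_enorm_fracLapIntegrand_le {lam : ℝ} (hlam : lam ∈ Ioo 0 1) {φ : ℝ → ℝ}
    (hφ : Integrable φ) (hBV : eVariationOn φ univ ≠ ⊤) :
    ∫⁻ p, ‖fracLapIntegrand lam φ p‖ₑ ∂(volume.prod volume) ≤
      ENNReal.ofReal (2 * (2 * ∫ x, |φ x|) ^ (1 - lam) * (eVariationOn φ univ).toReal ^ lam /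
        (lam * (1 - lam))) := by
  set a := 2 * ∫ x, |φ x|
  set b := (eVariationOn φ univ).toReal
  have ha : 0 ≤ a := mul_nonneg zero_le_two (integral_nonneg fun _ => abs_nonneg _)
  have hb : 0 ≤ b := ENNReal.toReal_nonneg
  have hslice : ∀ z, ∫⁻ x, ‖fracLapIntegrand lam φ (x, z)‖ₑ =
      (∫⁻ x, edist (φ (x + z)) (φ x)) * ENNReal.ofReal (|z| ^ (-(1 + lam))) := fun z => by
    rw [← lintegral_mul_const' _ _ ENNReal.ofReal_ne_top]
    refine lintegral_congr fun x => ?_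
    rw [fracLapIntegrand, div_eq_mul_inv, enorm_mul, edist_eq_enorm_sub,
      Real.rpow_neg (abs_nonneg z), Real.enorm_of_nonneg (r := (|z| ^ (1 + lam))⁻¹) (by positivity)]
  calc ∫⁻ p, ‖fracLapIntegrand lam φ p‖ₑ ∂(volume.prod volume)
      = ∫⁻ z, ∫⁻ x, ‖fracLapIntegrand lam φ (x, z)‖ₑ :=
        lintegral_prod_symm _ (aestronglyMeasurable_fracLapIntegrand lam hφ.1).enorm
    _ ≤ ∫⁻ z, ENNReal.ofReal (min a (b * |z|) * |z| ^ (-(1 + lam))) := lintegral_mono fun z => by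
        rw [hslice, ENNReal.ofReal_mul (le_min ha (by positivity))]
        gcongr
        exact lintegral_edist_add_le_ofReal_min hφ hBV z
    _ ≤ 2 * ∫⁻ z in Ioi 0, ENNReal.ofReal (min a (b * z) * z ^ (-(1 + lam))) :=
        lintegral_comp_abs_le (by fun_prop)
    _ = _ := by
        rw [lintegral_Ioi_ofReal_min_mul_rpow ha hb hlam, ← ENNReal.ofReal_ofNat 2,
          ← ENNReal.ofReal_mul zero_le_two]
        ring_nf

/-- For every `λ ∈ (0,1)` there is `C = C(λ) > 0` such that for every `c_λ > 0` and every
`φ ∈ L¹(ℝ) ∩ BV(ℝ)`: the integral defining `L[φ](x)` converges absolutely for a.e. `x`,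
`L[φ] ∈ L¹(ℝ)`, and `∫ |L[φ]| ≤ c_λ C ‖φ‖_{L¹}^{1−λ} |φ|_{BV}^{λ}`. -/
theorem fracLap_L1_estimate (lam : ℝ) (hlam : lam ∈ Set.Ioo (0 : ℝ) 1) :
    ∃ C : ℝ, 0 < C ∧
      ∀ (clam : ℝ), 0 < clam →
        ∀ φ : ℝ → ℝ, Integrable φ → eVariationOn φ Set.univ ≠ ⊤ →
          (∀ᵐ x : ℝ, fracLapConv lam φ x) ∧
          Integrable (fracLap clam lam φ) ∧
          ∫ x : ℝ, |fracLap clam lam φ x| ≤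
            clam * C * (∫ x : ℝ, |φ x|) ^ (1 - lam) *
              (eVariationOn φ Set.univ).toReal ^ lam := by
  have ⟨hlam0, hlam1⟩ := hlam
  refine ⟨2 * 2 ^ (1 - lam) / (lam * (1 - lam)), by bound, fun clam hclam φ hφ hBV => ?_⟩
  have hbound := lintegral_enorm_fracLapIntegrand_le hlam hφ hBV
  have hF : Integrable (fracLapIntegrand lam φ) (volume.prod volume) :=
    ⟨aestronglyMeasurable_fracLapIntegrand lam hφ.1, hbound.trans_lt ENNReal.ofReal_lt_top⟩
  rw [fracLap_eq_integral_fracLapIntegrand]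
  refine ⟨hF.prod_right_ae.mono fun x hx => hx.integrableOn,
    hF.integral_prod_left.const_mul clam, ?_⟩
  calc ∫ x, |clam * ∫ z, fracLapIntegrand lam φ (x, z)|
      = clam * ∫ x, ‖∫ z, fracLapIntegrand lam φ (x, z)‖ := by
        simp only [abs_mul, abs_of_pos hclam, integral_const_mul, Real.norm_eq_abs]
    _ ≤ clam * (2 * (2 * ∫ x, |φ x|) ^ (1 - lam) * (eVariationOn φ univ).toReal ^ lam /
          (lam * (1 - lam))) := by
        gcongr
        exact (integral_norm_integral_prod_le hF).trans
          (ENNReal.toReal_le_of_le_ofReal (by positivity) hbound)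
    _ = _ := by
        rw [Real.mul_rpow zero_le_two (integral_nonneg fun _ => abs_nonneg _)]
        ring
end

section
/- For all φ, ψ ∈ L¹(ℝ) ∩ BV(ℝ), the integrals ∫_ℝ ψ(x) L[φ](x) dx and ∫_ℝ φ(x) L[ψ](x) dx converge absolutely and are equal: ∫_ℝ ψ L[φ] dx = ∫_ℝ φ L[ψ] dx. -/
open MeasureTheory Filter Set
open scoped ENNReal

theorem LocallyBoundedVariationOn.measurable {α : Type*} [LinearOrder α] [TopologicalSpace α]
    [OrderClosedTopology α] [MeasurableSpace α] [BorelSpace α]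
    {f : α → ℝ} (h : LocallyBoundedVariationOn f univ) : Measurable f := by
  obtain ⟨p, q, hp, hq, rfl⟩ := h.exists_monotoneOn_sub_monotoneOn
  exact (monotoneOn_univ.1 hp).measurable.sub (monotoneOn_univ.1 hq).measurable

theorem BoundedVariationOn.exists_norm_le {α E : Type*} [LinearOrder α] [SeminormedAddCommGroup E]
    {f : α → E} (h : BoundedVariationOn f univ) : ∃ C, ∀ x, ‖f x‖ ≤ C := by
  rcases isEmpty_or_nonempty α with hα | ⟨⟨a⟩⟩
  · exact ⟨0, isEmptyElim⟩
  refine ⟨‖f a‖ + (eVariationOn f univ).toReal, fun x => ?_⟩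
  have := h.dist_le (mem_univ x) (mem_univ a)
  rw [dist_eq_norm] at this
  linarith [norm_le_insert' (f x) (f a)]

theorem eVariationOn.tsum_edist_le {α E : Type*} [LinearOrder α] [PseudoEMetricSpace E]
    (f : α → E) {u : ℤ → α} (hu : Monotone u) :
    ∑' n, edist (f (u (n + 1))) (f (u n)) ≤ eVariationOn f univ := by
  refine tsum_le_of_sum_le' zero_le fun s => ?_
  set N : ℕ := s.sup Int.natAbs
  have hs : s ⊆ (Finset.range (2 * N + 1)).image fun i : ℕ => (i : ℤ) - N := by
    intro n hn
    have : n.natAbs ≤ N := Finset.le_sup (f := Int.natAbs) hn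
    simp only [Finset.mem_image, Finset.mem_range]
    exact ⟨(n + N).toNat, by omega, by omega⟩
  calc ∑ n ∈ s, edist (f (u (n + 1))) (f (u n))
      ≤ ∑ n ∈ (Finset.range (2 * N + 1)).image (fun i : ℕ => (i : ℤ) - N),
          edist (f (u (n + 1))) (f (u n)) := Finset.sum_le_sum_of_subset hs
    _ = ∑ i ∈ Finset.range (2 * N + 1), edist (f (u (↑(i + 1) - N))) (f (u (i - N))) := by
        rw [Finset.sum_image fun i _ j _ h => by simpa using h]
        congr! 4
        push_cast; ring
    _ ≤ eVariationOn f univ :=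
        eVariationOn.sum_le (u := fun i : ℕ => u (i - N)) (fun i j hij => hu (by simpa using hij))
          fun _ => mem_univ _

section Translation

variable {E : Type*} [NormedAddCommGroup E] {f : ℝ → E}

theorem lintegral_enorm_sub_comp_add_le_of_pos (hf : AEStronglyMeasurable f) {z : ℝ} (hz : 0 < z) :
    ∫⁻ x, ‖f (x + z) - f x‖ₑ ≤ ‖z‖ₑ * eVariationOn f univ := by
  set F : ℝ → ℝ≥0∞ := fun x => ‖f (x + z) - f x‖ₑ
  have hpiece (n : ℤ) : ∫⁻ x in Ioc (n • z) ((n + 1) • z), F x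
      = ∫⁻ y in Ioc 0 z, ‖f (y + n • z + z) - f (y + n • z)‖ₑ := by
    rw [← (measurePreserving_add_right volume (n • z)).setLIntegral_comp_preimage_emb
      (measurableEmbedding_addRight _), preimage_add_const_Ioc, add_zsmul, one_zsmul, sub_self,
      add_sub_cancel_left]
  have hmeas (n : ℤ) : AEMeasurable (fun y => ‖f (y + n • z + z) - f (y + n • z)‖ₑ)
      (volume.restrict (Ioc 0 z)) := by
    have hshift (c : ℝ) : AEStronglyMeasurable (fun y => f (y + c)) :=
      hf.comp_measurePreserving (measurePreserving_add_right volume c)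
    simp only [add_assoc]
    exact ((hshift _).sub (hshift _)).enorm.restrict
  calc ∫⁻ x, F x = ∑' n : ℤ, ∫⁻ x in Ioc (n • z) ((n + 1) • z), F x := by
        rw [← lintegral_iUnion (fun _ => measurableSet_Ioc) (pairwise_disjoint_Ioc_zsmul z),
          iUnion_Ioc_zsmul hz, Measure.restrict_univ]
    _ = ∫⁻ y in Ioc 0 z, ∑' n : ℤ, ‖f (y + n • z + z) - f (y + n • z)‖ₑ := by
        rw [tsum_congr hpiece, lintegral_tsum hmeas]
    _ ≤ ∫⁻ _ in Ioc 0 z, eVariationOn f univ := by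
        refine lintegral_mono fun y => ?_
        have := eVariationOn.tsum_edist_le f (u := fun n : ℤ => y + n • z)
          fun m n hmn => by simpa using zsmul_le_zsmul_left hz.le hmn
        simpa [edist_eq_enorm_sub, add_zsmul, add_assoc, add_mul] using this
    _ = ‖z‖ₑ * eVariationOn f univ := by
        rw [setLIntegral_const, Real.volume_Ioc, sub_zero, mul_comm, Real.enorm_of_nonneg hz.le]

theorem lintegral_enorm_sub_comp_add_le (hf : AEStronglyMeasurable f) (z : ℝ) :
    ∫⁻ x, ‖f (x + z) - f x‖ₑ ≤ ‖z‖ₑ * eVariationOn f univ := by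
  rcases lt_trichotomy z 0 with hz | rfl | hz
  · have hreflect : ∫⁻ x, ‖f (x + z) - f x‖ₑ = ∫⁻ x, ‖f (x + -z) - f x‖ₑ := by
      rw [← lintegral_add_right_eq_self _ (-z)]
      simp_rw [neg_add_cancel_right, enorm_sub_rev]
    rw [hreflect, ← enorm_neg z]
    exact lintegral_enorm_sub_comp_add_le_of_pos hf (neg_pos.2 hz)
  · simp
  · exact lintegral_enorm_sub_comp_add_le_of_pos hf hz

theorem integral_norm_sub_comp_add_le (hf : Integrable f) (hfbv : BoundedVariationOn f univ)
    (z : ℝ) :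
    ∫ x, ‖f (x + z) - f x‖ ≤ min (2 * ∫ x, ‖f x‖) (|z| * (eVariationOn f univ).toReal) := by
  have hdiff : Integrable fun x => f (x + z) - f x := (hf.comp_add_right z).sub hf
  refine le_min ?_ ?_
  · calc ∫ x, ‖f (x + z) - f x‖ ≤ ∫ x, (‖f (x + z)‖ + ‖f x‖) :=
          integral_mono hdiff.norm
            ((hf.comp_add_right z).norm.add hf.norm) fun x => norm_sub_le _ _
      _ = 2 * ∫ x, ‖f x‖ := by
          rw [integral_add (hf.comp_add_right z).norm hf.norm,
            integral_add_right_eq_self (fun x => ‖f x‖)]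
          ring
  · rw [integral_norm_eq_lintegral_enorm hdiff.aestronglyMeasurable, ← Real.norm_eq_abs,
      ← toReal_enorm, ← ENNReal.toReal_mul]
    exact ENNReal.toReal_mono (ENNReal.mul_ne_top enorm_ne_top hfbv)
      (lintegral_enorm_sub_comp_add_le hf.aestronglyMeasurable z)

end Translation

theorem integrable_min_mul_div_abs_rpow {A V lam : ℝ} (hA : 0 ≤ A) (hV : 0 ≤ V)
    (hlam : lam ∈ Ioo 0 1) : Integrable fun z : ℝ => min A (|z| * V) / |z| ^ (1 + lam) := by
  set g : ℝ → ℝ := fun y => min A (y * V) / y ^ (1 + lam)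
  have hg : Measurable g := by fun_prop
  have hcomp := integrable_fun_norm_addHaar (volume : Measure ℝ) (f := g)
  simp only [Module.finrank_self, tsub_self, pow_zero, one_smul, Real.norm_eq_abs] at hcomp
  rw [hcomp, ← Ioc_union_Ioi_eq_Ioi zero_le_one]
  refine IntegrableOn.union ?_ ?_
  · have hint : IntegrableOn (fun y : ℝ => V * y ^ (-lam)) (Ioc 0 1) :=
      ((intervalIntegrable_iff_integrableOn_Ioc_of_le zero_le_one).1
        (intervalIntegral.intervalIntegrable_rpow' (by linarith [hlam.2]))).const_mul V
    refine hint.mono' hg.aestronglyMeasurable.restrict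
      (ae_restrict_of_forall_mem measurableSet_Ioc fun y hy => ?_)
    have hy0 : 0 < y := hy.1
    rw [Real.norm_eq_abs, abs_of_nonneg (by positivity), div_le_iff₀ (by positivity)]
    calc min A (y * V) ≤ y * V := min_le_right _ _
      _ = V * y ^ (-lam) * y ^ (1 + lam) := by
          rw [Real.rpow_neg hy0.le, Real.rpow_add hy0, Real.rpow_one]
          field_simp
  · have hint : IntegrableOn (fun y : ℝ => A * y ^ (-(1 + lam))) (Ioi 1) :=
      (integrableOn_Ioi_rpow_of_lt (by linarith [hlam.1]) zero_lt_one).const_mul A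
    refine hint.mono' hg.aestronglyMeasurable.restrict
      (ae_restrict_of_forall_mem measurableSet_Ioi fun y hy => ?_)
    have hy0 : 0 < y := zero_lt_one.trans hy
    rw [Real.norm_eq_abs, abs_of_nonneg (by positivity), Real.rpow_neg hy0.le, ← div_eq_mul_inv]
    exact div_le_div_of_nonneg_right (min_le_left _ _) (by positivity)

theorem integrable_fracLap_integrand {lam : ℝ} (hlam : lam ∈ Ioo 0 1) {f : ℝ → ℝ}
    (hf : Integrable f) (hfbv : BoundedVariationOn f univ) :
    Integrable (fun p : ℝ × ℝ => (f (p.1 + p.2) - f p.1) / |p.2| ^ (1 + lam))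
      (volume.prod volume) := by
  have hfm := hfbv.locallyBoundedVariationOn.measurable
  have hF : Measurable fun p : ℝ × ℝ => (f (p.1 + p.2) - f p.1) / |p.2| ^ (1 + lam) := by
    fun_prop
  have hnorm : AEStronglyMeasurable
      fun z => ∫ x, ‖(f (x + z) - f x) / |z| ^ (1 + lam)‖ :=
    (hF.norm.stronglyMeasurable.integral_prod_left' (μ := volume)).aestronglyMeasurable
  have hweight := integrable_min_mul_div_abs_rpow (A := 2 * ∫ x, ‖f x‖)
    (V := (eVariationOn f univ).toReal)
    (mul_nonneg zero_le_two (integral_nonneg fun x => norm_nonneg (f x))) ENNReal.toReal_nonneg hlam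
  rw [integrable_prod_iff' hF.aestronglyMeasurable]
  dsimp only
  refine ⟨ae_of_all _ fun z => ((hf.comp_add_right z).sub hf).div_const _,
    hweight.mono' hnorm (ae_of_all _ fun z => ?_)⟩
  have hpow : 0 ≤ |z| ^ (1 + lam) := Real.rpow_nonneg (abs_nonneg z) _
  rw [Real.norm_of_nonneg (integral_nonneg fun _ => norm_nonneg _)]
  simp only [norm_div, Real.norm_of_nonneg hpow, integral_div]
  exact div_le_div_of_nonneg_right (integral_norm_sub_comp_add_le hf hfbv z) hpow

theorem fracLap_eq_integral (clam lam : ℝ) (φ : ℝ → ℝ) (x : ℝ) :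
    fracLap clam lam φ x = clam * ∫ z, (φ (x + z) - φ x) / |z| ^ (1 + lam) := by
  rw [fracLap, restrict_compl_singleton]

section Pairing

variable {lam : ℝ} {φ ψ : ℝ → ℝ} {C : ℝ}

theorem integrable_mul_fracLap_integrand (hlam : lam ∈ Ioo 0 1) (hφ : Integrable φ)
    (hφbv : BoundedVariationOn φ univ) (hψ : AEStronglyMeasurable ψ) (hψC : ∀ x, ‖ψ x‖ ≤ C) :
    Integrable (fun p : ℝ × ℝ => ψ p.1 * ((φ (p.1 + p.2) - φ p.1) / |p.2| ^ (1 + lam)))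
      (volume.prod volume) :=
  (integrable_fracLap_integrand hlam hφ hφbv).bdd_mul hψ.comp_fst (ae_of_all _ fun p => hψC p.1)

theorem mul_fracLap_eq_integral (clam : ℝ) (x : ℝ) :
    ψ x * fracLap clam lam φ x
      = clam * ∫ z, ψ x * ((φ (x + z) - φ x) / |z| ^ (1 + lam)) := by
  rw [fracLap_eq_integral, integral_const_mul, mul_left_comm]

theorem integrable_mul_fracLap (hlam : lam ∈ Ioo 0 1) (clam : ℝ) (hφ : Integrable φ)
    (hφbv : BoundedVariationOn φ univ) (hψ : AEStronglyMeasurable ψ) (hψC : ∀ x, ‖ψ x‖ ≤ C) :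
    Integrable fun x => ψ x * fracLap clam lam φ x := by
  simp_rw [mul_fracLap_eq_integral]
  exact ((integrable_mul_fracLap_integrand hlam hφ hφbv hψ hψC).integral_prod_left).const_mul clam

theorem integral_mul_fracLap (hlam : lam ∈ Ioo 0 1) (clam : ℝ) (hφ : Integrable φ)
    (hφbv : BoundedVariationOn φ univ) (hψ : AEStronglyMeasurable ψ) (hψC : ∀ x, ‖ψ x‖ ≤ C) :
    ∫ x, ψ x * fracLap clam lam φ x
      = clam * ∫ z, (∫ x, ψ x * (φ (x + z) - φ x)) / |z| ^ (1 + lam) := by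
  simp_rw [mul_fracLap_eq_integral]
  rw [integral_const_mul, integral_integral_swap
    (f := fun x z => ψ x * ((φ (x + z) - φ x) / |z| ^ (1 + lam)))
    (integrable_mul_fracLap_integrand hlam hφ hφbv hψ hψC)]
  simp_rw [← integral_div, mul_div_assoc]

theorem integral_mul_sub_comp_add (hφ : Integrable φ) (hψ : AEStronglyMeasurable ψ)
    (hψC : ∀ x, ‖ψ x‖ ≤ C) (z : ℝ) :
    ∫ x, ψ x * (φ (x + z) - φ x) = ∫ x, φ x * (ψ (x - z) - ψ x) := by
  have hshift : Integrable fun x => ψ x * φ (x + z) :=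
    (hφ.comp_add_right z).bdd_mul hψ (ae_of_all _ hψC)
  have hdiag : Integrable fun x => ψ x * φ x := hφ.bdd_mul hψ (ae_of_all _ hψC)
  have hshift' : Integrable fun x => φ x * ψ (x - z) := by
    simpa [mul_comm] using hshift.comp_sub_right z
  simp_rw [mul_sub]
  rw [integral_sub hshift hdiag, integral_sub hshift' (by simpa only [mul_comm] using hdiag),
    ← integral_sub_right_eq_self (fun x => ψ x * φ (x + z)) z]
  simp [mul_comm]

end Pairing

theorem fracLap_self_adjoint_general (lam : ℝ) (hlam : lam ∈ Set.Ioo (0 : ℝ) 1)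
    (clam : ℝ)
    (φ ψ : ℝ → ℝ)
    (hφ1 : Integrable φ) (hφbv : eVariationOn φ Set.univ ≠ ⊤)
    (hψ1 : Integrable ψ) (hψbv : eVariationOn ψ Set.univ ≠ ⊤) :
    Integrable (fun x : ℝ => ψ x * fracLap clam lam φ x) ∧
    Integrable (fun x : ℝ => φ x * fracLap clam lam ψ x) ∧
    ∫ x : ℝ, ψ x * fracLap clam lam φ x = ∫ x : ℝ, φ x * fracLap clam lam ψ x := by
  obtain ⟨C, hC⟩ := BoundedVariationOn.exists_norm_le hφbv
  obtain ⟨D, hD⟩ := BoundedVariationOn.exists_norm_le hψbv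
  refine ⟨integrable_mul_fracLap hlam clam hφ1 hφbv hψ1.1 hD,
    integrable_mul_fracLap hlam clam hψ1 hψbv hφ1.1 hC, ?_⟩
  rw [integral_mul_fracLap hlam clam hφ1 hφbv hψ1.1 hD,
    integral_mul_fracLap hlam clam hψ1 hψbv hφ1.1 hC, ← integral_neg_eq_self]
  simp_rw [abs_neg, integral_mul_sub_comp_add hφ1 hψ1.1 hD, sub_neg_eq_add]

/-- For all `φ, ψ ∈ L¹(ℝ) ∩ BV(ℝ)`, the integrals `∫ ψ L[φ]` and `∫ φ L[ψ]` converge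
absolutely and are equal. -/
theorem fracLap_self_adjoint (lam : ℝ) (hlam : lam ∈ Set.Ioo (0 : ℝ) 1)
    (clam : ℝ) (hclam : 0 < clam)
    (φ ψ : ℝ → ℝ)
    (hφ1 : Integrable φ) (hφbv : eVariationOn φ Set.univ ≠ ⊤)
    (hψ1 : Integrable ψ) (hψbv : eVariationOn ψ Set.univ ≠ ⊤) :
    Integrable (fun x : ℝ => ψ x * fracLap clam lam φ x) ∧
    Integrable (fun x : ℝ => φ x * fracLap clam lam ψ x) ∧
    ∫ x : ℝ, ψ x * fracLap clam lam φ x = ∫ x : ℝ, φ x * fracLap clam lam ψ x :=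
  fracLap_self_adjoint_general lam hlam clam φ ψ hφ1 hφbv hψ1 hψbv
end

section
/- The weights G^i_j are well defined (each L[1_{I_j}] belongs to L¹(ℝ)) and satisfy: (a) for each i ∈ ℤ, Σ_{k∈ℤ} |G^i_k| < ∞ and Σ_{k∈ℤ} G^i_k = 0; (b) G^i_j = G^j_i and G^{i+1}_{j+1} = G^i_j for all i, j ∈ ℤ; (c) G^i_j ≥ 0 whenever i ≠ j; (d) G^i_i = −c_λ ( ∫_{|z|<1} |z|^{−λ} dz + ∫_{|z|>1} |z|^{−1−λ} dz ) Δx^{1−λ} ≤ 0 for every i ∈ ℤ. -/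
open MeasureTheory Filter Set

/-- Indicator function of the cell `I_j = (jΔx, (j+1)Δx)`. -/
noncomputable def cellInd (Δx : ℝ) (j : ℤ) : ℝ → ℝ :=
  Set.indicator (Set.Ioo ((j : ℝ) * Δx) (((j : ℝ) + 1) * Δx)) 1

/-- The weights `G^i_j = ∫_{I_i} L[1_{I_j}](x) dx`. -/
noncomputable def Gw (clam lam Δx : ℝ) (i j : ℤ) : ℝ :=
  ∫ x in Set.Ioo ((i : ℝ) * Δx) (((i : ℝ) + 1) * Δx), fracLap clam lam (cellInd Δx j) x

/-!
Write `L[1_{I_j}](x) = c_λ ∫ F_j(x, z) dz` with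
`F_j(x, z) = (1_{I_j}(x + z) - 1_{I_j}(x)) / |z|^{1+λ}`.
Since `∫ |1_I(x + z) - 1_I(x)| dx = 2 min(Δx, |z|)` for a cell `I`, and
`min(Δx, |z|) / |z|^{1+λ}` is integrable because `0 < λ < 1` (it behaves like `|z|^{-λ}`
at `0` and like `|z|^{-1-λ}` at infinity), `F_j` is integrable on `ℝ²`. Fubini then gives
`∫ L[1_{I_j}] = 0` by translation invariance, and
`G^i_j = c_λ ∫ (|I_i ∩ (I_j - z)| - |I_i ∩ I_j|) / |z|^{1+λ} dz`,
from which symmetry, translation invariance and the diagonal value (where the bracket is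
`-min(Δx, |z|)`) are read off. Summing `G^i_k = G^k_i = ∫_{I_k} L[1_{I_i}]` over the cells, which
tile `ℝ` up to a null set, gives the summability and the zero sum. Off the diagonal, `1_{I_j}`
vanishes on `I_i`, so the integrand of `G^i_j` is nonnegative.
-/

namespace FracLapWeights

lemma integral_Ioc_zero_rpow {s : ℝ} (hs : -1 < s) {a : ℝ} (ha : 0 ≤ a) :
    ∫ r in Ioc 0 a, r ^ s = a ^ (s + 1) / (s + 1) := by
  rw [← intervalIntegral.integral_of_le ha, integral_rpow (.inl hs),
    Real.zero_rpow (by linarith), sub_zero]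

/-- For an interval `I` of length `h`, `∫ |1_I (x + z) - 1_I x| dx / |z| ^ (1 + lam)` equals
`2 * shiftKernel h lam |z|`. -/
noncomputable def shiftKernel (h lam r : ℝ) : ℝ := min h r / r ^ (1 + lam)

section Kernel

variable {lam h : ℝ}

lemma shiftKernel_nonneg (hh : 0 ≤ h) {r : ℝ} (hr : 0 ≤ r) : 0 ≤ shiftKernel h lam r :=
  div_nonneg (le_min hh hr) (Real.rpow_nonneg hr _)

lemma shiftKernel_of_le {r : ℝ} (hr : 0 < r) (hrh : r ≤ h) :
    shiftKernel h lam r = r ^ (-lam) := by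
  rw [shiftKernel, min_eq_right hrh, Real.rpow_add hr, Real.rpow_one, Real.rpow_neg hr.le]
  field_simp

lemma shiftKernel_of_ge {r : ℝ} (hr : 0 < r) (hrh : h ≤ r) :
    shiftKernel h lam r = h * r ^ (-1 - lam) := by
  rw [shiftKernel, min_eq_left hrh, show -1 - lam = -(1 + lam) by ring, Real.rpow_neg hr.le,
    div_eq_mul_inv]

lemma integrableOn_shiftKernel_Ioc (hlam : lam < 1) :
    IntegrableOn (shiftKernel h lam) (Ioc 0 h) := by
  refine IntegrableOn.congr_fun ?_ (fun r hr => (shiftKernel_of_le hr.1 hr.2).symm)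
    measurableSet_Ioc
  exact (intervalIntegral.intervalIntegrable_rpow' (by linarith)).1

lemma integrableOn_shiftKernel_Ioi_self (hlam : 0 < lam) (hh : 0 < h) :
    IntegrableOn (shiftKernel h lam) (Ioi h) := by
  refine IntegrableOn.congr_fun ?_
    (fun r hr => (shiftKernel_of_ge (hh.trans hr) (le_of_lt hr)).symm) measurableSet_Ioi
  exact (integrableOn_Ioi_rpow_of_lt (by linarith) hh).const_mul h

lemma integral_shiftKernel_Ioi (hlam : lam ∈ Ioo 0 1) (hh : 0 < h) :
    ∫ r in Ioi 0, shiftKernel h lam r = h ^ (1 - lam) * (1 / (1 - lam) + 1 / lam) := by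
  have hlam0 : lam ≠ 0 := hlam.1.ne'
  have hlam1 : 1 - lam ≠ 0 := by linarith [hlam.2]
  rw [← Ioc_union_Ioi_eq_Ioi hh.le, setIntegral_union Ioc_disjoint_Ioi_same measurableSet_Ioi
      (integrableOn_shiftKernel_Ioc hlam.2) (integrableOn_shiftKernel_Ioi_self hlam.1 hh),
    setIntegral_congr_fun measurableSet_Ioc (fun r hr => shiftKernel_of_le hr.1 hr.2),
    setIntegral_congr_fun measurableSet_Ioi
      (fun r hr => shiftKernel_of_ge (hh.trans hr) (le_of_lt hr)),
    integral_Ioc_zero_rpow (by linarith [hlam.2]) hh.le, integral_const_mul,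
    integral_Ioi_rpow_of_lt (by linarith [hlam.1]) hh,
    show -1 - lam + 1 = -lam by ring, show -lam + 1 = 1 - lam by ring,
    show h ^ (1 - lam) = h * h ^ (-lam) by rw [sub_eq_add_neg, Real.rpow_add hh, Real.rpow_one]]
  field_simp

lemma integrable_shiftKernel_abs (hlam : lam ∈ Ioo 0 1) (hh : 0 < h) :
    Integrable fun z : ℝ => shiftKernel h lam |z| := by
  have hradial : IntegrableOn (shiftKernel h lam) (Ioi 0) := by
    rw [← Ioc_union_Ioi_eq_Ioi hh.le]
    exact (integrableOn_shiftKernel_Ioc hlam.2).union (integrableOn_shiftKernel_Ioi_self hlam.1 hh)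
  simpa using (integrable_fun_norm_addHaar (E := ℝ) volume (f := shiftKernel h lam)).2 (by simpa)

lemma integral_shiftKernel_abs (hlam : lam ∈ Ioo 0 1) (hh : 0 < h) :
    ∫ z, shiftKernel h lam |z| = 2 * (h ^ (1 - lam) * (1 / (1 - lam) + 1 / lam)) := by
  rw [integral_comp_abs (f := shiftKernel h lam), integral_shiftKernel_Ioi hlam hh]

end Kernel

lemma setIntegral_comp_abs (f : ℝ → ℝ) {s : Set ℝ} (hs : MeasurableSet s) :
    ∫ z in abs ⁻¹' s, f |z| = 2 * ∫ r in Ioi 0 ∩ s, f r := by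
  rw [← integral_indicator (measurable_abs hs), ← setIntegral_indicator hs]
  exact integral_comp_abs (f := s.indicator f)

lemma setIntegral_abs_lt_one_rpow {lam : ℝ} (hlam : lam < 1) :
    ∫ z in {z : ℝ | |z| < 1}, |z| ^ (-lam) = 2 / (1 - lam) := by
  change ∫ z in abs ⁻¹' Iio 1, |z| ^ (-lam) = _
  rw [setIntegral_comp_abs (· ^ (-lam)) measurableSet_Iio, Ioi_inter_Iio,
    ← integral_Ioc_eq_integral_Ioo, integral_Ioc_zero_rpow (by linarith) zero_le_one,
    Real.one_rpow, neg_add_eq_sub]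
  ring

lemma setIntegral_one_lt_abs_rpow {lam : ℝ} (hlam : 0 < lam) :
    ∫ z in {z : ℝ | 1 < |z|}, |z| ^ (-1 - lam) = 2 / lam := by
  change ∫ z in abs ⁻¹' Ioi 1, |z| ^ (-1 - lam) = _
  rw [setIntegral_comp_abs (· ^ (-1 - lam)) measurableSet_Ioi,
    inter_eq_right.2 (Ioi_subset_Ioi zero_le_one),
    integral_Ioi_rpow_of_lt (by linarith) zero_lt_one, Real.one_rpow,
    show -1 - lam + 1 = -lam by ring]
  field_simp

lemma integrable_indicator_Ioo (a b : ℝ) : Integrable ((Ioo a b).indicator (1 : ℝ → ℝ)) :=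
  (integrable_indicator_iff measurableSet_Ioo).2 (integrableOn_const measure_Ioo_lt_top.ne)

lemma indicator_Ioo_add (a b z x : ℝ) :
    (Ioo a b).indicator (1 : ℝ → ℝ) (x + z) = (Ioo (a - z) (b - z)).indicator 1 x := by
  rw [← preimage_add_const_Ioo, ← indicator_comp_right (fun x => x + z)]
  rfl

lemma setIntegral_indicator_Ioo (s : Set ℝ) (a b : ℝ) :
    ∫ x in s, (Ioo a b).indicator (1 : ℝ → ℝ) x = volume.real (s ∩ Ioo a b) := by
  rw [integral_indicator_one measurableSet_Ioo, measureReal_restrict_apply measurableSet_Ioo,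
    inter_comm]

lemma measureReal_Ioo_add_inter_Ioo_add (a b c d t : ℝ) :
    volume.real (Ioo (a + t) (b + t) ∩ Ioo (c + t) (d + t))
      = volume.real (Ioo a b ∩ Ioo c d) := by
  rw [measureReal_def, measureReal_def, ← measure_preimage_add_right volume t, preimage_inter,
    preimage_add_const_Ioo, preimage_add_const_Ioo, add_sub_cancel_right, add_sub_cancel_right,
    add_sub_cancel_right, add_sub_cancel_right]

lemma measureReal_Ioo_inter_Ioo_sub (a b z : ℝ) :
    volume.real (Ioo a b ∩ Ioo (a - z) (b - z)) = b - a - min (b - a) |z| := by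
  rw [Ioo_inter_Ioo, Real.volume_real_Ioo]
  rcases le_total 0 z with hz | hz
  · rw [max_eq_left (by linarith : a - z ≤ a), min_eq_right (by linarith : b - z ≤ b),
      abs_of_nonneg hz]
    grind
  · rw [max_eq_right (by linarith : a ≤ a - z), min_eq_left (by linarith : b ≤ b - z),
      abs_of_nonpos hz]
    grind

lemma abs_indicator_one_sub (A B : Set ℝ) (x : ℝ) :
    |B.indicator (1 : ℝ → ℝ) x - A.indicator 1 x|
      = A.indicator 1 x + B.indicator 1 x - 2 * (A ∩ B).indicator 1 x := by
  by_cases hA : x ∈ A <;> by_cases hB : x ∈ B <;> norm_num [hA, hB]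

lemma integral_abs_indicator_Ioo_add_sub {a b : ℝ} (hab : a ≤ b) (z : ℝ) :
    ∫ x, |(Ioo a b).indicator (1 : ℝ → ℝ) (x + z) - (Ioo a b).indicator 1 x|
      = 2 * min (b - a) |z| := by
  have hinter : Integrable ((Ioo a b ∩ Ioo (a - z) (b - z)).indicator (1 : ℝ → ℝ)) := by
    rw [← indicator_indicator]
    exact (integrable_indicator_Ioo _ _).indicator measurableSet_Ioo
  simp_rw [indicator_Ioo_add, abs_indicator_one_sub]
  rw [integral_sub ((integrable_indicator_Ioo _ _).fun_add (integrable_indicator_Ioo _ _))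
      (hinter.const_mul 2), integral_add (integrable_indicator_Ioo _ _)
      (integrable_indicator_Ioo _ _), integral_const_mul,
    integral_indicator_one measurableSet_Ioo, integral_indicator_one measurableSet_Ioo,
    integral_indicator_one (measurableSet_Ioo.inter measurableSet_Ioo),
    measureReal_Ioo_inter_Ioo_sub, Real.volume_real_Ioo_of_le hab,
    Real.volume_real_Ioo_of_le (by linarith)]
  ring

noncomputable def fracIntegrand (lam : ℝ) (φ : ℝ → ℝ) (p : ℝ × ℝ) : ℝ :=
  (φ (p.1 + p.2) - φ p.1) / |p.2| ^ (1 + lam)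

section FracLap

variable {lam : ℝ} {φ : ℝ → ℝ}

lemma fracLap_eq_integral (clam : ℝ) :
    fracLap clam lam φ = fun x => clam * ∫ z, fracIntegrand lam φ (x, z) := by
  ext x
  rw [fracLap, restrict_compl_singleton]
  rfl

lemma integrable_fracIntegrand (hφm : Measurable φ) (hφ : Integrable φ)
    (hdiff : Integrable fun z => (∫ x, |φ (x + z) - φ x|) / |z| ^ (1 + lam)) :
    Integrable (fracIntegrand lam φ) (volume.prod volume) := by
  have hmeas : Measurable (fracIntegrand lam φ) := by
    unfold fracIntegrand
    fun_prop
  refine (integrable_prod_iff' hmeas.aestronglyMeasurable).2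
    ⟨ae_of_all _ fun z => ?_, hdiff.congr (ae_of_all _ fun z => ?_)⟩
  · exact ((hφ.comp_add_right z).sub hφ).div_const (|z| ^ (1 + lam))
  simp only [fracIntegrand, norm_div, Real.norm_eq_abs,
    abs_of_nonneg (Real.rpow_nonneg (abs_nonneg z) _), integral_div]

lemma integrable_fracLap (clam : ℝ)
    (hF : Integrable (fracIntegrand lam φ) (volume.prod volume)) :
    Integrable (fracLap clam lam φ) := by
  rw [fracLap_eq_integral]
  exact hF.integral_prod_left.const_mul clam

lemma setIntegral_fracLap (clam : ℝ) (hφ : Integrable φ)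
    (hF : Integrable (fracIntegrand lam φ) (volume.prod volume)) (s : Set ℝ) :
    ∫ x in s, fracLap clam lam φ x
      = clam * ∫ z, ((∫ x in s, φ (x + z)) - ∫ x in s, φ x) / |z| ^ (1 + lam) := by
  have hFs : Integrable (fracIntegrand lam φ) ((volume.restrict s).prod volume) := by
    simpa only [← Measure.prod_restrict, Measure.restrict_univ]
      using hF.restrict (s := s ×ˢ univ)
  rw [fracLap_eq_integral, integral_const_mul, integral_integral_swap (by exact hFs)]
  congr 1
  refine integral_congr_ae (ae_of_all _ fun z => ?_)
  simp only [fracIntegrand]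
  rw [integral_div, integral_sub (hφ.comp_add_right z).integrableOn hφ.integrableOn]

lemma integral_fracLap_eq_zero (clam : ℝ) (hφ : Integrable φ)
    (hF : Integrable (fracIntegrand lam φ) (volume.prod volume)) :
    ∫ x, fracLap clam lam φ x = 0 := by
  simpa [integral_add_right_eq_self] using setIntegral_fracLap clam hφ hF univ

end FracLap

lemma integrable_fracIntegrand_indicator_Ioo {lam : ℝ} (hlam : lam ∈ Ioo 0 1) {a b : ℝ}
    (hab : a < b) :
    Integrable (fracIntegrand lam ((Ioo a b).indicator 1)) (volume.prod volume) := by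
  refine integrable_fracIntegrand (measurable_one.indicator measurableSet_Ioo)
    (integrable_indicator_Ioo a b) ?_
  refine ((integrable_shiftKernel_abs hlam (sub_pos.2 hab)).const_mul 2).congr
    (ae_of_all _ fun z => ?_)
  dsimp only
  rw [integral_abs_indicator_Ioo_add_sub hab.le, shiftKernel, mul_div_assoc]

noncomputable def cell (Δx : ℝ) (j : ℤ) : Set ℝ := Ioo (j * Δx) ((j + 1) * Δx)

lemma cell_eq_Ioo_zsmul (Δx : ℝ) (j : ℤ) : cell Δx j = Ioo (j • Δx) ((j + 1) • Δx) := by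
  simp [cell, zsmul_eq_mul]

lemma cell_add_one (Δx : ℝ) (j : ℤ) :
    cell Δx (j + 1) = Ioo (j * Δx + Δx) ((j + 1) * Δx + Δx) := by
  rw [cell]
  push_cast
  congr 1 <;> ring

lemma pairwise_disjoint_cell (Δx : ℝ) : Pairwise (Function.onFun Disjoint (cell Δx)) := by
  rw [show cell Δx = _ from funext (cell_eq_Ioo_zsmul Δx)]
  exact pairwise_disjoint_Ioo_zsmul Δx

lemma hasSum_setIntegral_cell {Δx : ℝ} (hΔx : 0 < Δx) {f : ℝ → ℝ} (hf : Integrable f) :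
    HasSum (fun k : ℤ => ∫ x in cell Δx k, f x) (∫ x, f x) := by
  simp_rw [cell_eq_Ioo_zsmul, ← integral_Ico_eq_integral_Ioo]
  have h := hasSum_integral_iUnion (fun k : ℤ => measurableSet_Ico)
    (pairwise_disjoint_Ico_zsmul Δx) hf.integrableOn
  rwa [iUnion_Ico_zsmul hΔx, setIntegral_univ] at h

section Weights

variable {clam lam Δx : ℝ}

lemma Gw_eq_setIntegral (i j : ℤ) :
    Gw clam lam Δx i j = ∫ x in cell Δx i, fracLap clam lam ((cell Δx j).indicator 1) x :=
  rfl

lemma integrable_fracIntegrand_cell (hlam : lam ∈ Ioo 0 1) (hΔx : 0 < Δx) (j : ℤ) :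
    Integrable (fracIntegrand lam ((cell Δx j).indicator 1)) (volume.prod volume) :=
  integrable_fracIntegrand_indicator_Ioo hlam (by rw [add_mul, one_mul]; linarith)

lemma Gw_eq_integral_overlap (hlam : lam ∈ Ioo 0 1) (hΔx : 0 < Δx) (i j : ℤ) :
    Gw clam lam Δx i j = clam * ∫ z,
      (volume.real (cell Δx i ∩ Ioo (j * Δx - z) ((j + 1) * Δx - z))
        - volume.real (cell Δx i ∩ cell Δx j)) / |z| ^ (1 + lam) := by
  rw [Gw_eq_setIntegral, setIntegral_fracLap (φ := (cell Δx j).indicator 1) clam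
    (integrable_indicator_Ioo _ _) (integrable_fracIntegrand_cell hlam hΔx j)]
  simp only [cell, indicator_Ioo_add, setIntegral_indicator_Ioo]

/-- Substituting `z ↦ -z` and then translating both intervals by `z` swaps `i` and `j`. -/
lemma Gw_comm (hlam : lam ∈ Ioo 0 1) (hΔx : 0 < Δx) (i j : ℤ) :
    Gw clam lam Δx i j = Gw clam lam Δx j i := by
  rw [Gw_eq_integral_overlap hlam hΔx, Gw_eq_integral_overlap hlam hΔx, ← integral_neg_eq_self]
  congr 2 with z
  have hshift : volume.real (cell Δx i ∩ Ioo (j * Δx + z) ((j + 1) * Δx + z))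
      = volume.real (Ioo (i * Δx - z) ((i + 1) * Δx - z) ∩ cell Δx j) := by
    rw [cell, cell, ← measureReal_Ioo_add_inter_Ioo_add (i * Δx - z) _ _ _ z, sub_add_cancel,
      sub_add_cancel]
  rw [abs_neg, sub_neg_eq_add, sub_neg_eq_add, hshift, inter_comm (cell Δx j),
    inter_comm (cell Δx j)]

lemma Gw_add_one_add_one (hlam : lam ∈ Ioo 0 1) (hΔx : 0 < Δx) (i j : ℤ) :
    Gw clam lam Δx (i + 1) (j + 1) = Gw clam lam Δx i j := by
  rw [Gw_eq_integral_overlap hlam hΔx, Gw_eq_integral_overlap hlam hΔx]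
  congr 2 with z
  have hshift : Ioo (((j + 1 : ℤ) : ℝ) * Δx - z) ((((j + 1 : ℤ) : ℝ) + 1) * Δx - z)
      = Ioo (j * Δx - z + Δx) ((j + 1) * Δx - z + Δx) := by
    push_cast
    congr 1 <;> ring
  rw [hshift, cell_add_one, cell_add_one, measureReal_Ioo_add_inter_Ioo_add,
    measureReal_Ioo_add_inter_Ioo_add, cell, cell]

lemma Gw_nonneg_of_ne (hclam : 0 ≤ clam) {i j : ℤ} (hij : i ≠ j) :
    0 ≤ Gw clam lam Δx i j := by
  rw [Gw_eq_setIntegral]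
  refine setIntegral_nonneg measurableSet_Ioo fun x hx => ?_
  have hx0 : (cell Δx j).indicator (1 : ℝ → ℝ) x = 0 :=
    indicator_of_notMem (disjoint_left.1 (pairwise_disjoint_cell Δx hij) hx) _
  rw [fracLap, hx0]
  refine mul_nonneg hclam (integral_nonneg fun z => div_nonneg ?_ (by positivity))
  rw [sub_zero]
  exact indicator_nonneg (fun _ _ => zero_le_one) _

lemma Gw_eq_setIntegral_comm (hlam : lam ∈ Ioo 0 1) (hΔx : 0 < Δx) (i k : ℤ) :
    Gw clam lam Δx i k = ∫ x in cell Δx k, fracLap clam lam ((cell Δx i).indicator 1) x := by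
  rw [Gw_comm hlam hΔx, Gw_eq_setIntegral]

lemma hasSum_Gw (hlam : lam ∈ Ioo 0 1) (hΔx : 0 < Δx) (i : ℤ) :
    HasSum (Gw clam lam Δx i) 0 := by
  have hF := integrable_fracIntegrand_cell hlam hΔx i
  have h := hasSum_setIntegral_cell hΔx (integrable_fracLap clam hF)
  rw [integral_fracLap_eq_zero (φ := (cell Δx i).indicator 1) clam
    (integrable_indicator_Ioo _ _) hF] at h
  rwa [show Gw clam lam Δx i = _ from funext (Gw_eq_setIntegral_comm (clam := clam) hlam hΔx i)]

lemma summable_abs_Gw (hlam : lam ∈ Ioo 0 1) (hΔx : 0 < Δx) (i : ℤ) :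
    Summable fun k => |Gw clam lam Δx i k| := by
  have hL := integrable_fracLap clam (integrable_fracIntegrand_cell hlam hΔx i)
  refine (hasSum_setIntegral_cell hΔx hL.abs).summable.of_nonneg_of_le (fun k => abs_nonneg _)
    fun k => ?_
  rw [Gw_eq_setIntegral_comm hlam hΔx]
  exact abs_integral_le_integral_abs

lemma Gw_self (hlam : lam ∈ Ioo 0 1) (hΔx : 0 < Δx) (i : ℤ) :
    Gw clam lam Δx i i = -clam * ∫ z, shiftKernel Δx lam |z| := by
  have hlen : ((i : ℝ) + 1) * Δx - i * Δx = Δx := by ring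
  rw [Gw_eq_integral_overlap hlam hΔx, neg_mul, ← mul_neg, ← integral_neg]
  congr 2 with z
  rw [inter_self, cell, measureReal_Ioo_inter_Ioo_sub, Real.volume_real_Ioo_of_le (by linarith),
    hlen, shiftKernel]
  ring

end Weights

end FracLapWeights

open FracLapWeights in
/-- Properties of the weights `G^i_j`:  well-definedness, summability and zero total sum,
symmetry and translation invariance, sign off the diagonal, and explicit diagonal value. -/
theorem Gw_properties (lam : ℝ) (hlam : lam ∈ Set.Ioo (0 : ℝ) 1)
    (clam : ℝ) (hclam : 0 < clam) (Δx : ℝ) (hΔx : 0 < Δx) :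
    (∀ j : ℤ, Integrable (fracLap clam lam (cellInd Δx j))) ∧
    (∀ i : ℤ, Summable (fun k : ℤ => |Gw clam lam Δx i k|) ∧
      ∑' k : ℤ, Gw clam lam Δx i k = 0) ∧
    (∀ i j : ℤ, Gw clam lam Δx i j = Gw clam lam Δx j i ∧
      Gw clam lam Δx (i + 1) (j + 1) = Gw clam lam Δx i j) ∧
    (∀ i j : ℤ, i ≠ j → 0 ≤ Gw clam lam Δx i j) ∧
    (∀ i : ℤ,
      Gw clam lam Δx i i =
        -clam * ((∫ z in {z : ℝ | |z| < 1}, |z| ^ (-lam)) +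
          ∫ z in {z : ℝ | 1 < |z|}, |z| ^ (-1 - lam)) * Δx ^ (1 - lam) ∧
      Gw clam lam Δx i i ≤ 0) := by
  refine ⟨fun j => integrable_fracLap clam (integrable_fracIntegrand_cell hlam hΔx j),
    fun i => ⟨summable_abs_Gw hlam hΔx i, (hasSum_Gw hlam hΔx i).tsum_eq⟩,
    fun i j => ⟨Gw_comm hlam hΔx i j, Gw_add_one_add_one hlam hΔx i j⟩,
    fun i j hij => Gw_nonneg_of_ne hclam.le hij, fun i => ⟨?_, ?_⟩⟩
  · rw [Gw_self hlam hΔx, integral_shiftKernel_abs hlam hΔx, setIntegral_abs_lt_one_rpow hlam.2,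
      setIntegral_one_lt_abs_rpow hlam.1]
    ring
  · rw [Gw_self hlam hΔx, neg_mul, neg_nonpos]
    exact mul_nonneg hclam.le (integral_nonneg fun z => shiftKernel_nonneg hΔx.le (abs_nonneg z))
end

section
/- Assume the CFL condition, let U = (U_j)_{j∈ℤ} be a summable sequence and set V = S(U). Then for every κ ∈ ℝ and every i ∈ ℤ: |V_i − κ| − |U_i − κ| + (Δt/Δx)(Q_i − Q_{i−1}) − (Δt/Δx²)( |A(U_{i+1}) − A(κ)| − 2|A(U_i) − A(κ)| + |A(U_{i−1}) − A(κ)| ) ≤ (bΔt/Δx) sgn(V_i − κ) Σ_{j∈ℤ} G^i_j U_j, where Q_i = f̂(max(U_i,κ), max(U_{i+1},κ)) − f̂(min(U_i,κ), min(U_{i+1},κ)) and sgn(0) = 0. -/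
/-! Without its nonlocal term, one step of the scheme is a function `H` of
`(U_{i-1}, U_i, U_{i+1})` that fixes constants and, under the CFL condition, is nondecreasing in
each argument. For such an `H` the Crandall–Majda argument gives
`|H(U) - κ| ≤ H(U ∨ κ) - H(U ∧ κ)`, and since `A` is nondecreasing the right-hand side is exactly
`|U_i - κ|` minus the numerical entropy flux and entropy diffusion differences. The nonlocal term
`T` is added back through `|h + T - κ| ≤ |h - κ| + sgn(h + T - κ) T`. -/

open MeasureTheory Filter Set

/-- `A(u) = ∫_0^u a(s) ds`. -/
noncomputable def Aint (a : ℝ → ℝ) (u : ℝ) : ℝ := ∫ s in (0:ℝ)..u, a s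

/-- One step of the explicit scheme. -/
noncomputable def schemeStep (clam lam Δx Δt b : ℝ) (fhat : ℝ → ℝ → ℝ) (a : ℝ → ℝ)
    (U : ℤ → ℝ) (i : ℤ) : ℝ :=
  U i - (Δt / Δx) * (fhat (U i) (U (i + 1)) - fhat (U (i - 1)) (U i))
    + (Δt / Δx ^ 2) * (Aint a (U (i + 1)) - 2 * Aint a (U i) + Aint a (U (i - 1)))
    + (b * Δt / Δx) * ∑' j : ℤ, Gw clam lam Δx i j * U j

/-- The scheme iterates: `U^0_i = (1/Δx)∫_{I_i} u₀` and `U^{n+1} = S(U^n)`. -/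
noncomputable def Uiter (clam lam Δx Δt b : ℝ) (fhat : ℝ → ℝ → ℝ) (a : ℝ → ℝ)
    (u₀ : ℝ → ℝ) : ℕ → ℤ → ℝ
  | 0 => fun i => (1 / Δx) * ∫ x in Set.Ioo ((i : ℝ) * Δx) (((i : ℝ) + 1) * Δx), u₀ x
  | n + 1 => schemeStep clam lam Δx Δt b fhat a (Uiter clam lam Δx Δt b fhat a u₀ n)

/-- `d_λ = c_λ ( ∫_{|z|<1} |z|^{−λ} dz + ∫_{|z|>1} |z|^{−1−λ} dz )`. -/
noncomputable def dlam (clam lam : ℝ) : ℝ :=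
  clam * ((∫ z in {z : ℝ | |z| < 1}, |z| ^ (-lam)) + ∫ z in {z : ℝ | 1 < |z|}, |z| ^ (-1 - lam))

/-- The CFL condition: `f̂` is C¹ with bounded partial derivatives and
`(Δt/Δx)(‖∂₁f̂‖_∞ + ‖∂₂f̂‖_∞) + (2Δt/Δx²)‖a‖_∞ + b d_λ Δt/Δx^λ ≤ 1`. -/
def CFL (clam lam Δx Δt b : ℝ) (fhat : ℝ → ℝ → ℝ) (a : ℝ → ℝ) : Prop :=
  ContDiff ℝ 1 (fun p : ℝ × ℝ => fhat p.1 p.2) ∧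
  ∃ M1 M2 Ma : ℝ,
    (∀ u v : ℝ, |deriv (fun s => fhat s v) u| ≤ M1) ∧
    (∀ u v : ℝ, |deriv (fun s => fhat u s) v| ≤ M2) ∧
    (∀ s : ℝ, |a s| ≤ Ma) ∧
    (Δt / Δx) * (M1 + M2) + (2 * Δt / Δx ^ 2) * Ma + b * dlam clam lam * Δt / Δx ^ lam ≤ 1

/-- Standing assumptions on the data `f`, `a` and the numerical flux `f̂`. -/
structure SchemeData (f a : ℝ → ℝ) (fhat : ℝ → ℝ → ℝ) : Prop where
  hfLip : ∃ K : NNReal, LipschitzWith K f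
  hf0 : f 0 = 0
  haLip : ∃ K : NNReal, LipschitzWith K a
  haNonneg : ∀ s : ℝ, 0 ≤ a s
  haBdd : ∃ M : ℝ, ∀ s : ℝ, a s ≤ M
  hfhatLip : ∃ K : NNReal, LipschitzWith K (fun p : ℝ × ℝ => fhat p.1 p.2)
  hconsistent : ∀ u : ℝ, fhat u u = f u
  hmono1 : ∀ v : ℝ, Monotone (fun u => fhat u v)
  hmono2 : ∀ u : ℝ, Antitone (fun v => fhat u v)

theorem Real.sign_mul_self (x : ℝ) : Real.sign x * x = |x| := by
  rcases lt_trichotomy x 0 with h | rfl | h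
  · rw [Real.sign_of_neg h, abs_of_neg h]; ring
  · simp
  · rw [Real.sign_of_pos h, abs_of_pos h]; ring

theorem Real.abs_sign_le_one (x : ℝ) : |Real.sign x| ≤ 1 := by
  rcases Real.sign_apply_eq x with h | h | h <;> simp [h]

theorem abs_add_sub_le_abs_sub_add_sign_mul (h t κ : ℝ) :
    |h + t - κ| ≤ |h - κ| + Real.sign (h + t - κ) * t := by
  have hsign : Real.sign (h + t - κ) * (h - κ) ≤ |h - κ| :=
    calc Real.sign (h + t - κ) * (h - κ) ≤ |Real.sign (h + t - κ)| * |h - κ| := by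
          rw [← abs_mul]; exact le_abs_self _
      _ ≤ |h - κ| := mul_le_of_le_one_left (abs_nonneg _) (Real.abs_sign_le_one _)
  have hsplit : |h + t - κ| = Real.sign (h + t - κ) * (h - κ) + Real.sign (h + t - κ) * t := by
    rw [← Real.sign_mul_self]; ring
  linarith

theorem Monotone.abs_sub_le_sup_sub_inf {α : Type*} [Lattice α] {H : α → ℝ} (hH : Monotone H)
    (x k : α) : |H x - H k| ≤ H (x ⊔ k) - H (x ⊓ k) := by
  have := hH (le_sup_left : x ≤ x ⊔ k)
  have := hH (le_sup_right : k ≤ x ⊔ k)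
  have := hH (inf_le_left : x ⊓ k ≤ x)
  have := hH (inf_le_right : x ⊓ k ≤ k)
  exact abs_sub_le_iff.2 ⟨by linarith, by linarith⟩

theorem abs_sub_le_of_abs_deriv_le {g : ℝ → ℝ} {M : ℝ} (hg : Differentiable ℝ g)
    (hM : ∀ x, |deriv g x| ≤ M) (x y : ℝ) : |g y - g x| ≤ M * |y - x| :=
  convex_univ.norm_image_sub_le_of_norm_deriv_le (fun z _ => hg z) (fun z _ => hM z)
    (mem_univ x) (mem_univ y)

theorem monotone_id_sub_of_abs_sub_le {g : ℝ → ℝ} {K : ℝ} (hK : K ≤ 1)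
    (hg : ∀ x y, |g y - g x| ≤ K * |y - x|) : Monotone fun x => x - g x := by
  intro x y hxy
  have hK' : K * (y - x) ≤ y - x := mul_le_of_le_one_left (sub_nonneg.2 hxy) hK
  have := (le_abs_self _).trans (hg x y)
  rw [abs_of_nonneg (sub_nonneg.2 hxy)] at this
  dsimp only
  linarith

theorem hasDerivAt_Aint {a : ℝ → ℝ} (ha : Continuous a) (x : ℝ) : HasDerivAt (Aint a) (a x) x :=
  (ha.integral_hasStrictDerivAt 0 x).hasDerivAt

theorem monotone_Aint {a : ℝ → ℝ} (ha : Continuous a) (ha0 : ∀ s, 0 ≤ a s) :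
    Monotone (Aint a) :=
  monotone_of_deriv_nonneg (fun x => (hasDerivAt_Aint ha x).differentiableAt)
    fun x => (hasDerivAt_Aint ha x).deriv ▸ ha0 x

theorem abs_Aint_sub_le {a : ℝ → ℝ} (ha : Continuous a) {M : ℝ} (hM : ∀ s, |a s| ≤ M) (u v : ℝ) :
    |Aint a v - Aint a u| ≤ M * |v - u| :=
  abs_sub_le_of_abs_deriv_le (fun x => (hasDerivAt_Aint ha x).differentiableAt)
    (fun x => (hasDerivAt_Aint ha x).deriv ▸ hM x) u v

-- `S(U)_i` without its nonlocal term, as a function of `(U_{i-1}, U_i, U_{i+1})`,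
-- with `r = Δt/Δx` and `s = Δt/Δx²`.
noncomputable def localStep (r s : ℝ) (fhat : ℝ → ℝ → ℝ) (A : ℝ → ℝ) (p : ℝ × ℝ × ℝ) : ℝ :=
  p.2.1 - r * (fhat p.2.1 p.2.2 - fhat p.1 p.2.1) + s * (A p.2.2 - 2 * A p.2.1 + A p.1)

section localStep

variable {r s : ℝ} {fhat : ℝ → ℝ → ℝ} {A : ℝ → ℝ}

theorem localStep_const (κ : ℝ) : localStep r s fhat A (κ, κ, κ) = κ := by
  simp only [localStep]; ring

theorem localStep_sup_sub_localStep_inf (hA : Monotone A) (u v w κ : ℝ) :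
    localStep r s fhat A ((u, v, w) ⊔ (κ, κ, κ)) - localStep r s fhat A ((u, v, w) ⊓ (κ, κ, κ)) =
      |v - κ| - r * ((fhat (max v κ) (max w κ) - fhat (min v κ) (min w κ)) -
          (fhat (max u κ) (max v κ) - fhat (min u κ) (min v κ))) +
        s * (|A w - A κ| - 2 * |A v - A κ| + |A u - A κ|) := by
  have hA_abs (x : ℝ) : A (max x κ) - A (min x κ) = |A x - A κ| := by
    rw [hA.map_max, hA.map_min, max_sub_min_eq_abs']
  rw [← max_sub_min_eq_abs' v κ, ← hA_abs u, ← hA_abs v, ← hA_abs w]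
  simp only [localStep, Prod.sup_def, Prod.inf_def]
  ring

theorem monotone_localStep {M₁ M₂ Mₐ : ℝ} (hr : 0 ≤ r) (hs : 0 ≤ s)
    (hmono₁ : ∀ v, Monotone fun u => fhat u v) (hmono₂ : ∀ u, Antitone fun v => fhat u v)
    (hlip₁ : ∀ w u v, |fhat v w - fhat u w| ≤ M₁ * |v - u|)
    (hlip₂ : ∀ u v w, |fhat u w - fhat u v| ≤ M₂ * |w - v|)
    (hA : Monotone A) (hAlip : ∀ u v, |A v - A u| ≤ Mₐ * |v - u|)
    (hcfl : r * (M₁ + M₂) + 2 * s * Mₐ ≤ 1) : Monotone (localStep r s fhat A) := by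
  rintro ⟨u, v, w⟩ ⟨u', v', w'⟩ ⟨hu : u ≤ u', hv : v ≤ v', hw : w ≤ w'⟩
  have h_left : localStep r s fhat A (u, v, w) ≤ localStep r s fhat A (u', v, w) := by
    have := mul_le_mul_of_nonneg_left (hmono₁ v hu) hr
    have := mul_le_mul_of_nonneg_left (hA hu) hs
    simp only [localStep]; linarith
  have h_right : localStep r s fhat A (u', v, w) ≤ localStep r s fhat A (u', v, w') := by
    have := mul_le_mul_of_nonneg_left (hmono₂ v hw) hr
    have := mul_le_mul_of_nonneg_left (hA hw) hs
    simp only [localStep]; linarith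
  -- In the centre variable the step is `x - g x` with `g` Lipschitz of constant at most `1`.
  have h_centre : localStep r s fhat A (u', v, w') ≤ localStep r s fhat A (u', v', w') := by
    let g x := r * (fhat x w' - fhat u' x) - s * (A w' - 2 * A x + A u')
    have hg (x y : ℝ) : |g y - g x| ≤ (r * (M₁ + M₂) + 2 * s * Mₐ) * |y - x| :=
      calc |g y - g x|
          _ = |r * (fhat y w' - fhat x w') + r * (fhat u' x - fhat u' y) + 2 * s * (A y - A x)| := by
            congr 1; ring
          _ ≤ r * (M₁ * |y - x|) + r * (M₂ * |y - x|) + 2 * s * (Mₐ * |y - x|) := by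
            refine (abs_add_three _ _ _).trans ?_
            rw [abs_mul, abs_mul, abs_mul, abs_of_nonneg hr, abs_of_nonneg (by positivity : 0 ≤ 2 * s)]
            gcongr
            · exact hlip₁ w' x y
            · exact abs_sub_comm x y ▸ hlip₂ u' y x
            · exact hAlip x y
          _ = (r * (M₁ + M₂) + 2 * s * Mₐ) * |y - x| := by ring
    have := monotone_id_sub_of_abs_sub_le hcfl hg hv
    simp only [localStep, g] at this ⊢
    linarith
  exact h_left.trans (h_right.trans h_centre)

end localStep

theorem dlam_nonneg {clam : ℝ} (hclam : 0 ≤ clam) (lam : ℝ) : 0 ≤ dlam clam lam :=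
  mul_nonneg hclam <| add_nonneg
    (integral_nonneg fun z => Real.rpow_nonneg (abs_nonneg z) _)
    (integral_nonneg fun z => Real.rpow_nonneg (abs_nonneg z) _)

theorem CFL.monotone_localStep {clam lam Δx Δt b : ℝ} {f a : ℝ → ℝ} {fhat : ℝ → ℝ → ℝ}
    (hcfl : CFL clam lam Δx Δt b fhat a) (hdata : SchemeData f a fhat) (hclam : 0 ≤ clam)
    (hb : 0 ≤ b) (hΔx : 0 < Δx) (hΔt : 0 ≤ Δt) :
    Monotone (localStep (Δt / Δx) (Δt / Δx ^ 2) fhat (Aint a)) := by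
  obtain ⟨hC1, M₁, M₂, Mₐ, hM₁, hM₂, hMₐ, hbound⟩ := hcfl
  obtain ⟨_, ha_lip⟩ := hdata.haLip
  have hdiff := hC1.differentiable one_ne_zero
  have hnonlocal : 0 ≤ b * dlam clam lam * Δt / Δx ^ lam := by
    have := dlam_nonneg hclam lam
    have := Real.rpow_pos_of_pos hΔx lam
    positivity
  have : 2 * Δt / Δx ^ 2 * Mₐ = 2 * (Δt / Δx ^ 2) * Mₐ := by ring
  refine _root_.monotone_localStep (by positivity) (by positivity)
    hdata.hmono1 hdata.hmono2 (fun w => abs_sub_le_of_abs_deriv_le ?_ (hM₁ · w))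
    (fun u => abs_sub_le_of_abs_deriv_le ?_ (hM₂ u)) (monotone_Aint ha_lip.continuous hdata.haNonneg)
    (abs_Aint_sub_le ha_lip.continuous hMₐ) (by linarith)
  · exact hdiff.comp (differentiable_id.prodMk (differentiable_const w))
  · exact hdiff.comp ((differentiable_const u).prodMk differentiable_id)

theorem cell_entropy_inequality_general (lam : ℝ)
    (clam : ℝ) (hclam : 0 < clam) (Δx Δt : ℝ) (hΔx : 0 < Δx) (hΔt : 0 < Δt)
    (b : ℝ) (hb : 0 ≤ b) (f a : ℝ → ℝ) (fhat : ℝ → ℝ → ℝ)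
    (hdata : SchemeData f a fhat)
    (hcfl : CFL clam lam Δx Δt b fhat a)
    (U : ℤ → ℝ) :
    ∀ (κ : ℝ) (i : ℤ),
      |schemeStep clam lam Δx Δt b fhat a U i - κ| - |U i - κ|
        + (Δt / Δx) *
          ((fhat (max (U i) κ) (max (U (i + 1)) κ) - fhat (min (U i) κ) (min (U (i + 1)) κ)) -
           (fhat (max (U (i - 1)) κ) (max (U i) κ) - fhat (min (U (i - 1)) κ) (min (U i) κ)))
        - (Δt / Δx ^ 2) *
          (|Aint a (U (i + 1)) - Aint a κ| - 2 * |Aint a (U i) - Aint a κ| +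
            |Aint a (U (i - 1)) - Aint a κ|) ≤
      (b * Δt / Δx) * Real.sign (schemeStep clam lam Δx Δt b fhat a U i - κ) *
        ∑' j : ℤ, Gw clam lam Δx i j * U j := by
  intro κ i
  obtain ⟨_, ha_lip⟩ := hdata.haLip
  set H := localStep (Δt / Δx) (Δt / Δx ^ 2) fhat (Aint a)
  set T := (b * Δt / Δx) * ∑' j : ℤ, Gw clam lam Δx i j * U j
  have hstep : schemeStep clam lam Δx Δt b fhat a U i = H (U (i - 1), U i, U (i + 1)) + T := rfl
  have hcrandall_majda :=
    (hcfl.monotone_localStep hdata hclam.le hb hΔx hΔt.le).abs_sub_le_sup_sub_inf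
      (U (i - 1), U i, U (i + 1)) (κ, κ, κ)
  rw [localStep_const,
    localStep_sup_sub_localStep_inf (monotone_Aint ha_lip.continuous hdata.haNonneg)]
    at hcrandall_majda
  have hsplit := abs_add_sub_le_abs_sub_add_sign_mul (H (U (i - 1), U i, U (i + 1))) T κ
  rw [← hstep] at hsplit
  have hsign : Real.sign (schemeStep clam lam Δx Δt b fhat a U i - κ) * T =
      (b * Δt / Δx) * Real.sign (schemeStep clam lam Δx Δt b fhat a U i - κ) *
        ∑' j : ℤ, Gw clam lam Δx i j * U j := by ring
  linarith

/-- Cell entropy inequality for one step `V = S(U)` of the explicit scheme: for every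
`κ ∈ ℝ` and `i ∈ ℤ`,
`|V_i − κ| − |U_i − κ| + (Δt/Δx)(Q_i − Q_{i−1})
  − (Δt/Δx²)(|A(U_{i+1}) − A(κ)| − 2|A(U_i) − A(κ)| + |A(U_{i−1}) − A(κ)|)
  ≤ (bΔt/Δx) sgn(V_i − κ) Σ_j G^i_j U_j`,
where `Q_i = f̂(U_i ∨ κ, U_{i+1} ∨ κ) − f̂(U_i ∧ κ, U_{i+1} ∧ κ)`. -/
theorem cell_entropy_inequality (lam : ℝ) (hlam : lam ∈ Set.Ioo (0 : ℝ) 1)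
    (clam : ℝ) (hclam : 0 < clam) (Δx Δt : ℝ) (hΔx : 0 < Δx) (hΔt : 0 < Δt)
    (b : ℝ) (hb : 0 ≤ b) (f a : ℝ → ℝ) (fhat : ℝ → ℝ → ℝ)
    (hdata : SchemeData f a fhat)
    (hcfl : CFL clam lam Δx Δt b fhat a)
    (U : ℤ → ℝ) (hU : Summable U) :
    ∀ (κ : ℝ) (i : ℤ),
      |schemeStep clam lam Δx Δt b fhat a U i - κ| - |U i - κ|
        + (Δt / Δx) *
          ((fhat (max (U i) κ) (max (U (i + 1)) κ) - fhat (min (U i) κ) (min (U (i + 1)) κ)) -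
           (fhat (max (U (i - 1)) κ) (max (U i) κ) - fhat (min (U (i - 1)) κ) (min (U i) κ)))
        - (Δt / Δx ^ 2) *
          (|Aint a (U (i + 1)) - Aint a κ| - 2 * |Aint a (U i) - Aint a κ| +
            |Aint a (U (i - 1)) - Aint a κ|) ≤
      (b * Δt / Δx) * Real.sign (schemeStep clam lam Δx Δt b fhat a U i - κ) *
        ∑' j : ℤ, Gw clam lam Δx i j * U j :=
  cell_entropy_inequality_general lam clam hclam Δx Δt hΔx hΔt b hb f a fhat hdata hcfl U
end

section
/- Let f: ℝ → ℝ be continuous and let f̂: ℝ² → ℝ be consistent with f and monotone. Then for all u⁻, u⁺ ∈ ℝ the oriented integral satisfies ∫_{u⁻}^{u⁺} ( f(s) − f̂(u⁻, u⁺) ) ds ≥ 0. -/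
/-! Monotonicity and consistency give `f̂(u⁻, u⁺) ≤ f̂(s, u⁺) ≤ f̂(s, s) = f(s)` for
`u⁻ ≤ s ≤ u⁺`, and the reverse chain for `u⁺ ≤ s ≤ u⁻`, so the integrand always has the sign
of the orientation of the integral. -/

open intervalIntegral Set

section MonotoneFlux

variable {α β : Type*} [Preorder α] [Preorder β] {f : α → β} {fhat : α → α → β}

theorem flux_le_of_mem_Icc (hconsistent : ∀ u, fhat u u = f u)
    (hmono1 : ∀ v, Monotone (fun u => fhat u v)) (hmono2 : ∀ u, Antitone (fun v => fhat u v))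
    {a b s : α} (hs : s ∈ Icc a b) : fhat a b ≤ f s :=
  calc fhat a b ≤ fhat s b := hmono1 b hs.1
    _ ≤ fhat s s := hmono2 s hs.2
    _ = f s := hconsistent s

theorem le_flux_of_mem_Icc (hconsistent : ∀ u, fhat u u = f u)
    (hmono1 : ∀ v, Monotone (fun u => fhat u v)) (hmono2 : ∀ u, Antitone (fun v => fhat u v))
    {a b s : α} (hs : s ∈ Icc b a) : f s ≤ fhat a b :=
  calc f s = fhat s s := (hconsistent s).symm
    _ ≤ fhat a s := hmono1 s hs.2
    _ ≤ fhat a b := hmono2 a hs.1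

end MonotoneFlux

theorem intervalIntegral.integral_nonneg_of_ge {g : ℝ → ℝ} {a b : ℝ}
    {μ : MeasureTheory.Measure ℝ} (hba : b ≤ a) (hg : ∀ s ∈ Icc b a, g s ≤ 0) :
    0 ≤ ∫ s in a..b, g s ∂μ := by
  have h : 0 ≤ ∫ s in b..a, -g s ∂μ := integral_nonneg hba fun s hs => neg_nonneg.mpr (hg s hs)
  rwa [integral_neg, ← integral_symm] at h

theorem eflux_inequality_general (f : ℝ → ℝ) (fhat : ℝ → ℝ → ℝ)
    (hconsistent : ∀ u : ℝ, fhat u u = f u)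
    (hmono1 : ∀ v : ℝ, Monotone (fun u => fhat u v))
    (hmono2 : ∀ u : ℝ, Antitone (fun v => fhat u v)) :
    ∀ um up : ℝ, 0 ≤ ∫ s in um..up, (f s - fhat um up) := by
  intro um up
  rcases le_total um up with h | h
  · exact integral_nonneg h fun s hs =>
      sub_nonneg.mpr (flux_le_of_mem_Icc hconsistent hmono1 hmono2 hs)
  · exact integral_nonneg_of_ge h fun s hs =>
      sub_nonpos.mpr (le_flux_of_mem_Icc hconsistent hmono1 hmono2 hs)

/-- For a continuous `f` and a numerical flux `f̂` that is consistent with `f`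
(`f̂(u,u) = f(u)`) and monotone (nondecreasing in the first argument, nonincreasing in
the second), the oriented integral `∫_{u⁻}^{u⁺} (f(s) − f̂(u⁻,u⁺)) ds` is nonnegative. -/
theorem eflux_inequality (f : ℝ → ℝ) (hf : Continuous f) (fhat : ℝ → ℝ → ℝ)
    (hconsistent : ∀ u : ℝ, fhat u u = f u)
    (hmono1 : ∀ v : ℝ, Monotone (fun u => fhat u v))
    (hmono2 : ∀ u : ℝ, Antitone (fun v => fhat u v)) :
    ∀ um up : ℝ, 0 ≤ ∫ s in um..up, (f s - fhat um up) :=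
  eflux_inequality_general f fhat hconsistent hmono1 hmono2
end
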